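/- There exists a family (τ_w), indexed by words w over {L,R}, of stopping times on Ω such that: (i) τ_w ≤ ℓ(w)+1 everywhere; (ii) ℙ(S_{τ_w} = d) = P_w(d) for every d ∈ ℤ; and (iii) τ_u(ω) ≤ τ_w(ω) for every ω ∈ Ω whenever u is a prefix of w. -/

import Mathlib

open MeasureTheory

/-- The probability mass functions `P t` on ℤ, defined by
`P 1 = δ₀`, `P (2t) = P t`, `P (2t+1) d = ½ P (t+1) (d+1) + ½ P t (d-1)`. -/
noncomputable def P : ℕ → ℤ → ℝ
  | 0, _ => 0
  | 1, d => if d = 0 then 1 else 0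
  | (n+2), d =>
      if h : (n + 2) % 2 = 0 then P ((n+2)/2) d
      else (1/2) * P ((n+2)/2 + 1) (d+1) + (1/2) * P ((n+2)/2) (d-1)
  decreasing_by all_goals omega

/-- Letters of the alphabet. -/
inductive LR | L | R
deriving DecidableEq

/-- One step of the identification of words with odd integers: `L : t ↦ 2t-1`, `R : t ↦ 2t+1`. -/
def LRstep (t : ℕ) : LR → ℕ
  | LR.L => 2 * t - 1
  | LR.R => 2 * t + 1

/-- The odd integer associated to a word over `{L,R}`, starting from 3. -/
def hword (w : List LR) : ℕ := w.foldl LRstep 3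

/-- `Ω = {-1,+1}^ℕ`, coded as `ℕ → Bool`; the coordinate `ω i` codes `ξ_{i+1} = ±1`. -/
def xi (i : ℕ) (ω : ℕ → Bool) : ℤ := if ω i then 1 else -1

/-- The simple symmetric random walk `S n = ξ₁ + ⋯ + ξ_n`. -/
def S (n : ℕ) (ω : ℕ → Bool) : ℤ := ∑ i ∈ Finset.range n, xi i ω

/-! The stopping time `τ_t` follows the recursion defining `P_t`: an even index is halved at no
cost, while an odd index `2s + 1` consumes one step of the walk and moves to `s` after a step
`+1` and to `s + 1` after a step `-1`. By induction `S_{τ_t}` then has law `P_t`, and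
`τ_t ≤ log₂ t`.

Monotonicity: `h(uv)` is reachable from `h(u)` by the maps `x ↦ 2x - 1, 2x, 2x + 1`, i.e.
`|h(uv) - 2^k h(u)| < 2^k` for some `k`, and for odd indices this inequality passes to the children
with the same `k`; so `τ` grows along such chains. -/

namespace StoppingFamily

lemma P_one (d : ℤ) : P 1 d = if d = 0 then 1 else 0 := by rw [P]

lemma P_of_even {t : ℕ} (d : ℤ) (he : t % 2 = 0) (ht : 2 ≤ t) : P t d = P (t / 2) d := by
  obtain _ | _ | n := t
  all_goals first | omega | rw [P, dif_pos he]

lemma P_of_odd {t : ℕ} (d : ℤ) (ho : t % 2 = 1) (ht : 2 ≤ t) :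
    P t d = 1 / 2 * P (t / 2 + 1) (d + 1) + 1 / 2 * P (t / 2) (d - 1) := by
  obtain _ | _ | n := t
  all_goals first | omega | rw [P, dif_neg (by omega)]

def tail (ω : ℕ → Bool) : ℕ → Bool := fun i => ω (i + 1)

lemma S_succ (n : ℕ) (ω : ℕ → Bool) : S (n + 1) ω = xi 0 ω + S n (tail ω) := by
  rw [S, Finset.sum_range_succ', add_comm]
  rfl

lemma S_congr {n k : ℕ} {ω ω' : ℕ → Bool} (h : ∀ i < n, ω i = ω' i) (hk : k ≤ n) :
    S k ω = S k ω' :=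
  Finset.sum_congr rfl fun i hi => by
    rw [xi, xi, h i (by rw [Finset.mem_range] at hi; omega)]

def child (t : ℕ) (b : Bool) : ℕ := if b then t / 2 else t / 2 + 1

lemma child_le (t : ℕ) (b : Bool) : child t b ≤ t / 2 + 1 := by
  unfold child; split <;> omega

lemma child_lt {t : ℕ} (b : Bool) (ht : 3 ≤ t) : child t b < t := by
  unfold child; split <;> omega

def tau : ℕ → (ℕ → Bool) → ℕ
  | 0, _ => 0
  | 1, _ => 0
  | (n + 2), ω =>
      if (n + 2) % 2 = 0 then tau ((n + 2) / 2) ω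
      else tau (child (n + 2) (ω 0)) (tail ω) + 1
  decreasing_by
  · omega
  · exact child_lt _ (by omega)

section tau

variable {t : ℕ} {ω : ℕ → Bool}

lemma tau_of_le_one (ht : t ≤ 1) : tau t ω = 0 := by
  interval_cases t <;> rw [tau]

lemma tau_of_even (he : t % 2 = 0) (ht : 2 ≤ t) : tau t ω = tau (t / 2) ω := by
  obtain _ | _ | n := t
  all_goals first | omega | rw [tau, if_pos he]

lemma tau_of_odd (ho : t % 2 = 1) (ht : 2 ≤ t) :
    tau t ω = tau (child t (ω 0)) (tail ω) + 1 := by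
  obtain _ | _ | n := t
  all_goals first | omega | rw [tau, if_neg (by omega)]

lemma tau_le_of_le_two_pow {m : ℕ} (h : t ≤ 2 ^ (m + 1)) : tau t ω ≤ m := by
  induction t using Nat.strong_induction_on generalizing m ω with
  | _ t ih =>
    rcases Nat.lt_or_ge t 2 with ht | ht
    · simp [tau_of_le_one (Nat.le_of_lt_succ ht)]
    rcases Nat.mod_two_eq_zero_or_one t with he | ho
    · rw [tau_of_even he ht]
      exact ih _ (by omega) (by omega)
    · rw [tau_of_odd ho ht]
      obtain _ | m := m
      · omega
      · have := child_le t (ω 0)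
        have := pow_succ 2 (m + 1)
        exact Nat.succ_le_succ (ih _ (child_lt _ (by omega)) (by omega))

lemma tau_le_self : tau t ω ≤ t :=
  tau_le_of_le_two_pow (by have := Nat.lt_two_pow_self (n := t); rw [pow_succ]; omega)

lemma tau_congr {n : ℕ} {ω' : ℕ → Bool} (h : ∀ i < n, ω i = ω' i) (hn : tau t ω ≤ n) :
    tau t ω' = tau t ω := by
  induction t using Nat.strong_induction_on generalizing n ω ω' with
  | _ t ih =>
    rcases Nat.lt_or_ge t 2 with ht | ht
    · rw [tau_of_le_one (by omega), tau_of_le_one (by omega)]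
    rcases Nat.mod_two_eq_zero_or_one t with he | ho
    · rw [tau_of_even he ht] at hn ⊢
      rw [tau_of_even he ht]
      exact ih _ (by omega) h hn
    · rw [tau_of_odd ho ht] at hn ⊢
      rw [tau_of_odd ho ht, ← h 0 (by omega), ih _ (child_lt _ (by omega)) (ω := tail ω)
        (ω' := tail ω') (n := n - 1) (fun i hi => h (i + 1) (by omega)) (by omega)]

lemma S_tau_of_odd (ho : t % 2 = 1) (ht : 2 ≤ t) :
    S (tau t ω) ω = xi 0 ω + S (tau (child t (ω 0)) (tail ω)) (tail ω) := by
  rw [tau_of_odd ho ht, S_succ]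

lemma dependsOn_S_tau (t : ℕ) : DependsOn (fun ω => S (tau t ω) ω) (Set.Iio t) := by
  intro ω ω' h
  have h' : ∀ i < t, ω i = ω' i := fun i hi => h i hi
  dsimp only
  rw [tau_congr h' tau_le_self, S_congr h' tau_le_self]

end tau

/-- For `y ≥ 1`, the descendants of `y` at depth `k` under `x ↦ 2x - 1, 2x, 2x + 1` are exactly
the `z` with `|z - 2 ^ k * y| < 2 ^ k`. -/
def IsDescendant (y z : ℕ) : Prop := ∃ k : ℕ, |(z : ℤ) - 2 ^ k * y| < 2 ^ k

namespace IsDescendant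

variable {y z : ℕ}

lemma two_le (h : IsDescendant y z) (hy : 2 ≤ y) : 2 ≤ z := by
  obtain ⟨k, hk⟩ := h
  have : (2 : ℤ) ^ k * 2 ≤ 2 ^ k * y := by gcongr; exact_mod_cast hy
  have : (1 : ℤ) ≤ 2 ^ k := one_le_pow₀ (by norm_num)
  have := (abs_lt.mp hk).1
  omega

lemma half_left (h : IsDescendant y z) (hy : y % 2 = 0) : IsDescendant (y / 2) z := by
  obtain ⟨k, hk⟩ := h
  have hy2 : ((y / 2 : ℕ) : ℤ) * 2 = y := by omega
  have hk0 : (0 : ℤ) < 2 ^ k := by positivity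
  rw [abs_lt] at hk
  refine ⟨k + 1, abs_lt.mpr ?_⟩
  rw [pow_succ]
  constructor <;> nlinarith

lemma half_right (h : IsDescendant y z) (hy : y % 2 = 1) (hz : z % 2 = 0) :
    IsDescendant y (z / 2) := by
  obtain ⟨_ | k, hk⟩ := h
  · simp only [pow_zero, one_mul, abs_lt] at hk
    omega
  have hz2 : ((z / 2 : ℕ) : ℤ) * 2 = z := by omega
  rw [pow_succ, abs_lt] at hk
  exact ⟨k, abs_lt.mpr ⟨by nlinarith, by nlinarith⟩⟩

lemma child (h : IsDescendant y z) (hy : y % 2 = 1) (hz : z % 2 = 1) (b : Bool) :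
    IsDescendant (child y b) (child z b) := by
  obtain ⟨k, hk⟩ := h
  have hk1 : (1 : ℤ) ≤ 2 ^ k := one_le_pow₀ (by norm_num)
  rw [abs_lt] at hk
  refine ⟨k, abs_lt.mpr ?_⟩
  cases b
  · have hy2 : ((y / 2 + 1 : ℕ) : ℤ) * 2 = y + 1 := by omega
    have hz2 : ((z / 2 + 1 : ℕ) : ℤ) * 2 = z + 1 := by omega
    simp only [StoppingFamily.child, Bool.false_eq_true, if_false]
    constructor <;> nlinarith
  · have hy2 : ((y / 2 : ℕ) : ℤ) * 2 = y - 1 := by omega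
    have hz2 : ((z / 2 : ℕ) : ℤ) * 2 = z - 1 := by omega
    simp only [StoppingFamily.child, if_true]
    constructor <;> nlinarith

end IsDescendant

theorem tau_mono_of_isDescendant {y z : ℕ} (h : IsDescendant y z) (ω : ℕ → Bool) :
    tau y ω ≤ tau z ω := by
  rcases Nat.lt_or_ge y 2 with hy | hy
  · simp [tau_of_le_one (Nat.le_of_lt_succ hy)]
  have hz := h.two_le hy
  rcases Nat.mod_two_eq_zero_or_one y with hye | hyo
  · rw [tau_of_even hye hy]
    exact tau_mono_of_isDescendant (h.half_left hye) ω
  rcases Nat.mod_two_eq_zero_or_one z with hze | hzo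
  · rw [tau_of_even hze hz]
    exact tau_mono_of_isDescendant (h.half_right hyo hze) ω
  · have := child_lt (ω 0) (t := y) (by omega)
    have := child_lt (ω 0) (t := z) (by omega)
    rw [tau_of_odd hyo hy, tau_of_odd hzo hz]
    exact Nat.succ_le_succ (tau_mono_of_isDescendant (h.child hyo hzo (ω 0)) (tail ω))
termination_by y + z

lemma abs_foldl_LRstep_sub_lt (v : List LR) {s : ℕ} (hs : 1 ≤ s) :
    |((v.foldl LRstep s : ℕ) : ℤ) - 2 ^ v.length * s| < 2 ^ v.length := by
  induction v generalizing s with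
  | nil => simp
  | cons a v ih =>
    have hs' : 1 ≤ LRstep s a ∧ |(LRstep s a : ℤ) - 2 * s| ≤ 1 := by
      cases a <;> exact ⟨by simp only [LRstep]; omega,
        abs_le.mpr ⟨by simp only [LRstep]; omega, by simp only [LRstep]; omega⟩⟩
    rw [List.foldl_cons, List.length_cons]
    generalize LRstep s a = s' at hs' ⊢
    have hpos : (0 : ℤ) < 2 ^ v.length := by positivity
    set F : ℤ := ((v.foldl LRstep s' : ℕ) : ℤ)
    calc |F - 2 ^ (v.length + 1) * s|
        = |(F - 2 ^ v.length * s') + 2 ^ v.length * (s' - 2 * s)| := by ring_nf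
      _ ≤ |F - 2 ^ v.length * s'| + 2 ^ v.length * |(s' : ℤ) - 2 * s| := by
          rw [← abs_of_pos hpos, ← abs_mul, abs_of_pos hpos]; exact abs_add_le _ _
      _ < 2 ^ v.length + 2 ^ v.length * 1 :=
          add_lt_add_of_lt_of_le (ih hs'.1) (by gcongr; exact hs'.2)
      _ = 2 ^ (v.length + 1) := by ring

lemma isDescendant_hword (w : List LR) : IsDescendant 3 (hword w) :=
  ⟨w.length, abs_foldl_LRstep_sub_lt w (by norm_num)⟩

lemma hword_le_two_pow (w : List LR) : hword w ≤ 2 ^ (w.length + 2) := by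
  have h := (abs_lt.mp (abs_foldl_LRstep_sub_lt w (s := 3) (by norm_num))).2
  have : (hword w : ℤ) ≤ 2 ^ (w.length + 2) := by
    rw [pow_add]; unfold hword; omega
  exact_mod_cast this

lemma isDescendant_hword_append (u v : List LR) : IsDescendant (hword u) (hword (u ++ v)) := by
  have hu := (isDescendant_hword u).two_le (by norm_num)
  have happend : hword (u ++ v) = v.foldl LRstep (hword u) := List.foldl_append ..
  exact ⟨v.length, happend ▸ abs_foldl_LRstep_sub_lt v (by omega)⟩

def pad (N : ℕ) (f : Fin N → Bool) : ℕ → Bool :=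
  fun i => if h : i < N then f ⟨i, h⟩ else false

@[simp]
lemma pad_apply_fin {N : ℕ} (f : Fin N → Bool) (i : Fin N) : pad N f i = f i := by
  simp [pad]

lemma pad_cons_zero {M : ℕ} (b : Bool) (g : Fin M → Bool) : pad (M + 1) (Fin.cons b g) 0 = b :=
  pad_apply_fin _ 0

lemma tail_pad_cons {M : ℕ} (b : Bool) (g : Fin M → Bool) :
    tail (pad (M + 1) (Fin.cons b g)) = pad M g := by
  funext i
  by_cases hi : i < M
  · simpa [tail, pad, hi] using Fin.cons_succ (α := fun _ => Bool) b g ⟨i, hi⟩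
  · simp [tail, pad, hi]

theorem measure_eq_card_mul_of_dependsOn {ℙ : Measure (ℕ → Bool)}
    (hcyl : ∀ (s : Finset ℕ) (f : ℕ → Bool),
      ℙ {ω | ∀ i ∈ s, ω i = f i} = (1/2 : ENNReal) ^ s.card)
    {N : ℕ} {A : Set (ℕ → Bool)} [DecidablePred fun f : Fin N → Bool => pad N f ∈ A]
    (hA : DependsOn (· ∈ A) (Set.Iio N)) :
    ℙ A = (Finset.univ.filter fun f : Fin N → Bool => pad N f ∈ A).card
      * (1/2 : ENNReal) ^ N := by
  set cyl : (Fin N → Bool) → Set (ℕ → Bool) :=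
    fun f => {ω | ∀ i ∈ Finset.range N, ω i = pad N f i}
  have mem_cyl {f ω} : ω ∈ cyl f ↔ ∀ i : Fin N, ω i = f i := by
    simp only [cyl, Set.mem_ofPred_eq, Finset.mem_range]
    exact ⟨fun h i => (h i i.2).trans (pad_apply_fin f i), fun h i hi => by
      simpa [pad, hi] using h ⟨i, hi⟩⟩
  have hA_eq : A = ⋃ f ∈ Finset.univ.filter fun f : Fin N → Bool => pad N f ∈ A, cyl f := by
    ext ω
    simp only [Set.mem_iUnion, Finset.mem_filter, Finset.mem_univ, true_and, exists_prop]
    constructor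
    · intro hω
      refine ⟨fun i => ω i, ?_, mem_cyl.mpr fun _ => rfl⟩
      exact (hA fun i (hi : i < N) => by simp [pad, hi]).mp hω
    · rintro ⟨f, hf, hω⟩
      exact (hA fun i (hi : i < N) => by simp [pad, hi, mem_cyl.mp hω ⟨i, hi⟩]).mp hf
  have hdisj : (Finset.univ.filter fun f : Fin N → Bool => pad N f ∈ A : Set _).PairwiseDisjoint
      cyl := fun f _ g _ hfg => Set.disjoint_left.mpr fun ω hf hg =>
      hfg (funext fun i => ((mem_cyl.mp hf i).symm.trans (mem_cyl.mp hg i)))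
  have hmeas (f : Fin N → Bool) : MeasurableSet (cyl f) := by
    simp only [cyl, Set.ofPred_forall]
    exact .biInter (Finset.range N).countable_toSet fun i _ =>
      measurableSet_eq_fun (measurable_pi_apply i) measurable_const
  conv_lhs => rw [hA_eq]
  rw [measure_biUnion_finset hdisj fun f _ => hmeas f, Finset.sum_congr rfl fun f _ =>
    (hcyl (Finset.range N) (pad N f)).trans (by rw [Finset.card_range]),
    Finset.sum_const, nsmul_eq_mul]

lemma card_filter_fin_succ {M : ℕ} (p : (Fin (M + 1) → Bool) → Prop) [DecidablePred p] :
    (Finset.univ.filter p).card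
      = (Finset.univ.filter fun g : Fin M → Bool => p (Fin.cons true g)).card
        + (Finset.univ.filter fun g : Fin M → Bool => p (Fin.cons false g)).card := by
  simp only [Finset.card_filter]
  rw [← (Fin.consEquiv fun _ => Bool).sum_comp, Fintype.sum_prod_type, Fintype.sum_bool]
  rfl

lemma S_tau_pad_cons {t M : ℕ} (ho : t % 2 = 1) (ht : 2 ≤ t) (b : Bool) (g : Fin M → Bool) :
    S (tau t (pad (M + 1) (Fin.cons b g))) (pad (M + 1) (Fin.cons b g))
      = (if b then 1 else -1) + S (tau (child t b) (pad M g)) (pad M g) := by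
  rw [S_tau_of_odd ho ht, xi, pad_cons_zero, tail_pad_cons]

theorem card_S_tau_eq {t N : ℕ} (d : ℤ) (ht : 1 ≤ t) (hN : t ≤ N) :
    ((Finset.univ.filter fun f : Fin N → Bool => S (tau t (pad N f)) (pad N f) = d).card : ℝ)
      = P t d * 2 ^ N := by
  induction t using Nat.strong_induction_on generalizing N d with
  | _ t ih =>
    rcases Nat.lt_or_ge t 2 with ht1 | ht2
    · obtain rfl : t = 1 := by omega
      simp only [tau_of_le_one le_rfl, S, Finset.range_zero, Finset.sum_empty, P_one]
      by_cases hd : (0 : ℤ) = d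
      · simp [hd]
      · simp [hd, Ne.symm hd]
    rcases Nat.mod_two_eq_zero_or_one t with he | ho
    · simp only [tau_of_even he ht2, P_of_even d he ht2]
      exact ih _ (by omega) d (by omega) (by omega)
    obtain ⟨M, rfl⟩ : ∃ M, N = M + 1 := ⟨N - 1, by omega⟩
    simp only [card_filter_fin_succ, S_tau_pad_cons ho ht2, child, if_true, Bool.false_eq_true,
      if_false]
    have hplus : ∀ x : ℤ, (1 + x = d ↔ x = d - 1) := fun x => by omega
    have hminus : ∀ x : ℤ, (-1 + x = d ↔ x = d + 1) := fun x => by omega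
    simp only [hplus, hminus]
    push_cast
    rw [ih _ (by omega) (d - 1) (by omega) (by omega),
      ih _ (by omega) (d + 1) (by omega) (by omega), P_of_odd d ho ht2, pow_succ]
    ring

theorem measure_S_tau_eq {ℙ : Measure (ℕ → Bool)}
    (hcyl : ∀ (s : Finset ℕ) (f : ℕ → Bool),
      ℙ {ω | ∀ i ∈ s, ω i = f i} = (1/2 : ENNReal) ^ s.card)
    {t : ℕ} (ht : 1 ≤ t) (d : ℤ) :
    ℙ {ω | S (tau t ω) ω = d} = ENNReal.ofReal (P t d) := by
  have hdep : DependsOn (· ∈ {ω | S (tau t ω) ω = d}) (Set.Iio t) := fun ω ω' h => by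
    simp only [Set.mem_ofPred_eq, dependsOn_S_tau t h]
  have hP : P t d = (Finset.univ.filter fun f : Fin t → Bool =>
      S (tau t (pad t f)) (pad t f) = d).card / 2 ^ t := by
    rw [card_S_tau_eq d ht le_rfl, mul_div_cancel_right₀ _ (by positivity)]
  rw [measure_eq_card_mul_of_dependsOn hcyl hdep, hP, ENNReal.ofReal_div_of_pos (by positivity),
    ENNReal.ofReal_natCast, ENNReal.ofReal_pow zero_le_two, ENNReal.ofReal_ofNat, one_div,
    ← ENNReal.inv_pow, ← div_eq_mul_inv]
  rfl

end StoppingFamily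

open StoppingFamily in
theorem exists_stopping_family_general (ℙ : Measure (ℕ → Bool))
    (hcyl : ∀ (s : Finset ℕ) (f : ℕ → Bool),
      ℙ {ω | ∀ i ∈ s, ω i = f i} = (1/2 : ENNReal) ^ s.card) :
    ∃ τ : List LR → (ℕ → Bool) → ℕ,
      (∀ (w : List LR) (ω : ℕ → Bool), τ w ω ≤ w.length + 1) ∧
      (∀ (w : List LR) (n : ℕ) (ω ω' : ℕ → Bool),
        (∀ i < n, ω i = ω' i) → τ w ω ≤ n → τ w ω' ≤ n) ∧
      (∀ (w : List LR) (d : ℤ),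
        ℙ {ω | S (τ w ω) ω = d} = ENNReal.ofReal (P (hword w) d)) ∧
      (∀ u w : List LR, u <+: w → ∀ ω : ℕ → Bool, τ u ω ≤ τ w ω) := by
  refine ⟨fun w => tau (hword w), fun w _ => tau_le_of_le_two_pow (hword_le_two_pow w),
    fun w n ω ω' h hn => (tau_congr h hn).trans_le hn,
    fun w => measure_S_tau_eq hcyl
      (Nat.one_le_of_lt ((isDescendant_hword w).two_le (by norm_num))), ?_⟩
  rintro u _ ⟨v, rfl⟩ ω
  exact tau_mono_of_isDescendant (isDescendant_hword_append u v) ω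

/-- There is a family `(τ_w)` of stopping times on `Ω = {-1,+1}^ℕ` (carrying the
fair-coin product probability measure `ℙ`, characterized by its values on cylinder
sets) such that: (i) `τ_w ≤ ℓ(w) + 1` everywhere; (ii) each `τ_w` is a stopping
time for the coordinate filtration, i.e. the event `{τ_w ≤ n}` depends only on the
first `n` coordinates; (iii) the law of the stopped walk `S_{τ_w}` is `P_w`;
(iv) `τ_u ≤ τ_w` pointwise whenever `u` is a prefix of `w`. -/
theorem exists_stopping_family (ℙ : Measure (ℕ → Bool)) [IsProbabilityMeasure ℙ]
    (hcyl : ∀ (s : Finset ℕ) (f : ℕ → Bool),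
      ℙ {ω | ∀ i ∈ s, ω i = f i} = (1/2 : ENNReal) ^ s.card) :
    ∃ τ : List LR → (ℕ → Bool) → ℕ,
      (∀ (w : List LR) (ω : ℕ → Bool), τ w ω ≤ w.length + 1) ∧
      (∀ (w : List LR) (n : ℕ) (ω ω' : ℕ → Bool),
        (∀ i < n, ω i = ω' i) → τ w ω ≤ n → τ w ω' ≤ n) ∧
      (∀ (w : List LR) (d : ℤ),
        ℙ {ω | S (τ w ω) ω = d} = ENNReal.ofReal (P (hword w) d)) ∧
      (∀ u w : List LR, u <+: w → ∀ ω : ℕ → Bool, τ u ω ≤ τ w ω) :=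
  exists_stopping_family_general ℙ hcyl
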